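/- Let H ≤ G and N ⊴ G in a finite group G with gcd(|H|, |N|) = 1. If H satisfies the partial Π-property in G, then HN/N satisfies the partial Π-property in G/N. -/

import Mathlib

/-!
Push the chief series of `G` forward to `G ⧸ N` and drop the steps that collapse. By the
correspondence theorem and Dedekind's law, a chief factor `L / K` maps onto a chief factor or
vanishes. For the index condition put `A = (H ⊔ K) ⊓ L`: as `|H|` and `|N|` are coprime,
`H ⊓ LN ≤ L` and `N ⊓ KH ≤ K`. The first makes the image of `A` the corresponding intersection
in `G ⧸ N`, the second gives `|AN/N| / |KN/N| = |A| / |K|`, and the index of a normalizer can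
only shrink under a surjection.
-/

/-- A subgroup `H` of a finite group `G` satisfies the partial `Π`-property in `G` if
there is a chief series `1 = c 0 < c 1 < ... < c n = G` such that for every chief factor
`c (i+1) / c i`, the index `|G/c i : N_{G/c i}((H ⊔ c i) ⊓ c (i+1) / c i)|`
(which equals `|G : N_G((H ⊔ c i) ⊓ c (i+1))|`) is a `π`-number for
`π = π((H ⊔ c i) ⊓ c (i+1) / c i)`, i.e. all its prime divisors divide the order
`|(H ⊔ c i) ⊓ c (i+1)| / |c i|` of that intersection. -/
def PartialPiProperty (G : Type) [Group G] (H : Subgroup G) : Prop :=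
  ∃ (n : ℕ) (c : ℕ → Subgroup G),
    c 0 = ⊥ ∧ c n = ⊤ ∧
    (∀ i, i ≤ n → (c i).Normal) ∧
    (∀ i, i < n → c i < c (i + 1)) ∧
    (∀ i, i < n → ∀ X : Subgroup G, X.Normal → c i ≤ X → X ≤ c (i + 1) →
      X = c i ∨ X = c (i + 1)) ∧
    (∀ i, i < n → ∀ q : ℕ, q.Prime →
      q ∣ (Subgroup.normalizer (((H ⊔ c i) ⊓ c (i + 1) : Subgroup G) : Set G)).index →
      q ∣ Nat.card ((H ⊔ c i) ⊓ c (i + 1) : Subgroup G) / Nat.card (c i))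

open Subgroup

theorem exists_chain_of_forall_eq_or {α : Type*} (r : α → α → Prop) :
    ∀ (n : ℕ) (d : ℕ → α), (∀ i < n, d i = d (i + 1) ∨ r (d i) (d (i + 1))) →
      ∃ (m : ℕ) (e : ℕ → α), e 0 = d 0 ∧ e m = d n ∧ ∀ k < m, r (e k) (e (k + 1)) := by
  intro n
  induction n with
  | zero => exact fun d _ => ⟨0, d, rfl, rfl, by simp⟩
  | succ n ih =>
    intro d hd
    obtain ⟨m, e, he0, hem, he⟩ := ih (fun i => d (i + 1)) fun i hi => hd (i + 1) (by omega)
    rcases hd 0 n.succ_pos with h0 | h0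
    · exact ⟨m, e, he0.trans h0.symm, hem, he⟩
    · refine ⟨m + 1, fun | 0 => d 0 | k + 1 => e k, rfl, hem, ?_⟩
      rintro (_ | k) hk
      · simpa [he0] using h0
      · exact he k (by omega)

namespace Subgroup

variable {G Q : Type*} [Group G] [Group Q]

/-- Dedekind's modular law, for a normal subgroup in place of the usual inclusion. -/
theorem inf_sup_normal_eq {X : Subgroup G} (K : Subgroup G) {N : Subgroup G} [N.Normal]
    (hNX : N ≤ X) : X ⊓ (K ⊔ N) = X ⊓ K ⊔ N :=
  SetLike.coe_injective <| by
    rw [coe_inf, mul_normal, mul_normal, inf_mul_assoc X K N hNX]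

/-- The image of `K ⊓ (M ⊔ L)` in `G ⧸ M` has order dividing both `|K|` and `|L|`. -/
theorem inf_sup_le_of_coprime {K L : Subgroup G} (M : Subgroup G) [M.Normal]
    (hcop : (Nat.card K).Coprime (Nat.card L)) : K ⊓ (M ⊔ L) ≤ M := by
  have hmap : (K ⊓ (M ⊔ L)).map (QuotientGroup.mk' M) ≤ L.map (QuotientGroup.mk' M) := by
    simpa [map_sup] using
      map_mono (f := QuotientGroup.mk' M) (inf_le_right (a := K) (b := M ⊔ L))
  have hcard : Nat.card ((K ⊓ (M ⊔ L)).map (QuotientGroup.mk' M)) = 1 :=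
    Nat.eq_one_of_dvd_coprimes hcop ((card_map_dvd _ _).trans (card_dvd_of_le inf_le_left))
      ((card_dvd_of_le hmap).trans (card_map_dvd _ _))
  simpa [map_eq_bot_iff] using card_eq_one.mp hcard

theorem card_inf_ker_mul_card_map (φ : G →* Q) (K : Subgroup G) :
    Nat.card (φ.ker ⊓ K : Subgroup G) * Nat.card (K.map φ) = Nat.card K := by
  rw [← relIndex_ker, ← inf_relIndex_right, ← relIndex_bot_left, ← relIndex_bot_left,
    relIndex_mul_relIndex _ _ _ bot_le inf_le_right]

theorem card_map_div_card_map [Finite G] (φ : G →* Q) {K A : Subgroup G} (hKA : K ≤ A)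
    (hker : φ.ker ⊓ A ≤ K) :
    Nat.card (A.map φ) / Nat.card (K.map φ) = Nat.card A / Nat.card K := by
  have hinf : φ.ker ⊓ A = φ.ker ⊓ K :=
    le_antisymm (le_inf inf_le_left hker) (inf_le_inf_left _ hKA)
  rw [← card_inf_ker_mul_card_map φ A, ← card_inf_ker_mul_card_map φ K, hinf,
    Nat.mul_div_mul_left _ _ Nat.card_pos]

theorem map_sup_inf_map_eq {φ : G →* Q} (hφ : Function.Surjective φ) {H K L : Subgroup G}
    [K.Normal] (hKL : K ≤ L) (hH : H ⊓ (L ⊔ φ.ker) ≤ L) :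
    (H.map φ ⊔ K.map φ) ⊓ L.map φ = ((H ⊔ K) ⊓ L).map φ := by
  refine le_antisymm ?_ (map_sup H K φ ▸ map_inf_le _ _ _)
  rw [← comap_le_comap_of_surjective hφ, comap_inf, ← map_sup, comap_map_eq, comap_map_eq,
    comap_map_eq]
  calc (H ⊔ K ⊔ φ.ker) ⊓ (L ⊔ φ.ker) = (L ⊔ φ.ker) ⊓ (H ⊔ K) ⊔ φ.ker := by
        rw [inf_comm, inf_sup_normal_eq _ le_sup_right]
    _ = (L ⊔ φ.ker) ⊓ H ⊔ K ⊔ φ.ker := by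
        rw [inf_sup_normal_eq _ (hKL.trans le_sup_left)]
    _ ≤ (H ⊔ K) ⊓ L ⊔ φ.ker := by
        refine sup_le_sup_right (sup_le (le_inf ?_ ?_) (le_inf le_sup_right hKL)) _
        · exact inf_le_right.trans le_sup_left
        · exact inf_comm (L ⊔ φ.ker) H ▸ hH

theorem index_normalizer_map_dvd {φ : G →* Q} (hφ : Function.Surjective φ) (A : Subgroup G) :
    (normalizer ((A.map φ : Subgroup Q) : Set Q)).index ∣ (normalizer (A : Set G)).index :=
  (index_dvd_of_le (le_normalizer_map φ)).trans (index_map_dvd _ hφ)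

def NoNormalBetween (K L : Subgroup G) : Prop :=
  ∀ X : Subgroup G, X.Normal → K ≤ X → X ≤ L → X = K ∨ X = L

theorem NoNormalBetween.map {φ : G →* Q} (hφ : Function.Surjective φ) {K L : Subgroup G}
    [L.Normal] (hKL : K ≤ L) (h : NoNormalBetween K L) :
    NoNormalBetween (K.map φ) (L.map φ) := by
  intro X hX hKX hXL
  have hKY : K ≤ X.comap φ := map_le_iff_le_comap.mp hKX
  have hYL : X.comap φ ≤ L ⊔ φ.ker := comap_map_eq φ L ▸ comap_mono hXL
  rcases h (X.comap φ ⊓ L) inferInstance (le_inf hKY hKL) inf_le_right with hK | hL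
  · left
    have hYK : X.comap φ = K ⊔ φ.ker := by
      rw [← inf_eq_left.mpr hYL, inf_sup_normal_eq _ (ker_le_comap φ X), hK]
    rw [← map_comap_eq_self_of_surjective hφ X, hYK, map_sup, map_ker_self, sup_bot_eq]
  · exact .inr (le_antisymm hXL (map_le_iff_le_comap.mpr (hL ▸ inf_le_left)))

end Subgroup

section

variable {G Q : Type*} [Group G] [Group Q]

def PiIndexCondition (H K L : Subgroup G) : Prop :=
  ∀ q : ℕ, q.Prime → q ∣ (normalizer (((H ⊔ K) ⊓ L : Subgroup G) : Set G)).index →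
    q ∣ Nat.card ((H ⊔ K) ⊓ L : Subgroup G) / Nat.card K

theorem PiIndexCondition.map [Finite G] {φ : G →* Q} (hφ : Function.Surjective φ)
    {H K L : Subgroup G} [K.Normal] [L.Normal] (hKL : K ≤ L)
    (hcop : (Nat.card H).Coprime (Nat.card φ.ker)) (h : PiIndexCondition H K L) :
    PiIndexCondition (H.map φ) (K.map φ) (L.map φ) := by
  intro q hq hdvd
  have hHL : H ⊓ (L ⊔ φ.ker) ≤ L := inf_sup_le_of_coprime L hcop
  have hkerK : φ.ker ⊓ (K ⊔ H) ≤ K := inf_sup_le_of_coprime K hcop.symm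
  rw [map_sup_inf_map_eq hφ hKL hHL] at hdvd ⊢
  rw [card_map_div_card_map φ (le_inf le_sup_right hKL)
    ((inf_le_inf_left _ (inf_le_left.trans (sup_comm H K).le)).trans hkerK)]
  exact h q hq (hdvd.trans (index_normalizer_map_dvd hφ _))

def IsPartialPiStep (H K L : Subgroup G) : Prop :=
  K < L ∧ L.Normal ∧ NoNormalBetween K L ∧ PiIndexCondition H K L

end

theorem partialPiProperty_of_chain {G : Type} [Group G] {H : Subgroup G} (n : ℕ)
    (d : ℕ → Subgroup G) (h0 : d 0 = ⊥) (hn : d n = ⊤)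
    (hd : ∀ i < n, d i = d (i + 1) ∨ IsPartialPiStep H (d i) (d (i + 1))) :
    PartialPiProperty G H := by
  obtain ⟨m, e, he0, hem, he⟩ := exists_chain_of_forall_eq_or (IsPartialPiStep H) n d hd
  refine ⟨m, e, he0.trans h0, hem.trans hn, ?_, fun k hk => (he k hk).1,
    fun k hk => (he k hk).2.2.1, fun k hk => (he k hk).2.2.2⟩
  rintro (_ | k) hk
  · rw [he0, h0]
    exact normal_bot
  · exact (he k hk).2.1

/-- Let `H ≤ G` and `N ⊴ G` with `gcd(|H|, |N|) = 1` in the finite group `G`. If `H`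
satisfies the partial `Π`-property in `G`, then `HN/N` satisfies the partial
`Π`-property in `G/N`. -/
theorem partialPi_quotient_of_coprime (G : Type) [Group G] [Finite G]
    (H N : Subgroup G) [N.Normal] (hcop : Nat.Coprime (Nat.card H) (Nat.card N))
    (h : PartialPiProperty G H) :
    PartialPiProperty (G ⧸ N) (H.map (QuotientGroup.mk' N)) := by
  obtain ⟨n, c, hc0, hcn, hnorm, hlt, hchief, hpi⟩ := h
  have hsurj := QuotientGroup.mk'_surjective N
  refine partialPiProperty_of_chain n (fun i => (c i).map (QuotientGroup.mk' N))
    (by simp [hc0]) (by simp [hcn, map_top_of_surjective _ hsurj]) fun i hi => ?_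
  have := hnorm i hi.le
  have := hnorm (i + 1) hi
  have hle := (hlt i hi).le
  rcases (map_mono (f := QuotientGroup.mk' N) hle).eq_or_lt with heq | hstep
  · exact .inl heq
  · exact .inr ⟨hstep, inferInstance, NoNormalBetween.map hsurj hle (hchief i hi),
      PiIndexCondition.map hsurj hle (by rwa [QuotientGroup.ker_mk']) (hpi i hi)⟩
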